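/- arXiv:2207.08308 — 2 statements merged into one kernel-verified Lean document; each statement's English description precedes it below -/
import Mathlib

section
/- Let m ≥ 3 and m̄ = ⌈m/2⌉. For r ∈ {1,…,m}, let N(r) denote the number of sequences (β_0, β_1, …, β_{m̄}) of integers with β_0 = r, 1 ≤ β_i ≤ m for all i, and |β_i − β_{i−1}| = 1 for i = 1,…,m̄. Then max_{1≤r≤m} N(r) = 2^{m̄} − 2 if m is odd, and max_{1≤r≤m} N(r) = 2^{m̄} − 1 if m is even. -/
open MeasureTheory Filter Topology

noncomputable section

/-- Cauchy transform of a finite positive Borel measure on `ℝ`. -/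
def cauchyT (s : Measure ℝ) (z : ℂ) : ℂ := ∫ x, (z - (x : ℂ))⁻¹ ∂s

/-- Forward Nikishin functions: `nikAux σ g j = ŝ_{j, j+g}`. -/
def nikAux (σ : ℕ → Measure ℝ) : ℕ → ℕ → ℂ → ℂ
  | 0, j => cauchyT (σ j)
  | g + 1, j => fun z => ∫ x, nikAux σ g (j + 1) (x : ℂ) / (z - (x : ℂ)) ∂(σ j)

/-- Reversed Nikishin functions: `nikRevAux σ g k = ŝ_{k, k-g}`. -/
def nikRevAux (σ : ℕ → Measure ℝ) : ℕ → ℕ → ℂ → ℂ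
  | 0, k => cauchyT (σ k)
  | g + 1, k => fun z => ∫ x, nikRevAux σ g (k - 1) (x : ℂ) / (z - (x : ℂ)) ∂(σ k)

/-- `sHat σ j k = ŝ_{j,k}` (forward Nikishin function if `j ≤ k`, reversed one if `j > k`). -/
def sHat (σ : ℕ → Measure ℝ) (j k : ℕ) : ℂ → ℂ :=
  if j ≤ k then nikAux σ (k - j) j else nikRevAux σ (j - k) j

/-- The branch of `√((z-a)(z-b))` holomorphic on `ℂ ∖ [a,b]` and positive for `z > b`. -/
def sqrtBr (a b : ℝ) (z : ℂ) : ℂ :=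
  Complex.exp ((Complex.log (z - (a : ℂ)) + Complex.log (z - (b : ℂ))) / 2)

/-- Radon–Nikodym derivative w.r.t. Lebesgue measure, as a real valued function. -/
def rnd (μ : Measure ℝ) (x : ℝ) : ℝ := (μ.rnDeriv volume x).toReal

/-- Szegő's condition on `[a,b]`. -/
def SzegoCond (μ : Measure ℝ) (a b : ℝ) : Prop :=
  IntegrableOn (fun x => Real.log (rnd μ x) / Real.sqrt ((b - x) * (x - a)))
    (Set.Ioo a b) volume

/-- The Szegő function of a measure on `[a,b]`. -/
def szegoFn (μ : Measure ℝ) (a b : ℝ) (z : ℂ) : ℂ :=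
  Complex.exp ((sqrtBr a b z / (2 * (Real.pi : ℂ))) *
    ∫ x in Set.Ioo a b,
      (Real.log (Real.sqrt ((b - x) * (x - a)) * rnd μ x) : ℂ) /
        (((x : ℂ) - z) * (Real.sqrt ((b - x) * (x - a)) : ℂ)))

/-- The value of the Szegő function at `∞`. -/
def szegoInf (μ : Measure ℝ) (a b : ℝ) : ℝ :=
  Real.exp (-(1 / (2 * Real.pi)) *
    ∫ x in Set.Ioo a b,
      Real.log (Real.sqrt ((b - x) * (x - a)) * rnd μ x) / Real.sqrt ((b - x) * (x - a)))

/-- Logarithmic potential `V^μ(x) = ∫ log(1/|x-t|) dμ(t)`. -/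
def logPotential (μ : Measure ℝ) (x : ℝ) : ℝ := ∫ t, Real.log (1 / |x - t|) ∂μ

/-- `Φ(z) = exp ∫ Log(z - t) dμ(t)`. -/
def PhiFn (μ : Measure ℝ) (z : ℂ) : ℂ := Complex.exp (∫ t, Complex.log (z - (t : ℂ)) ∂μ)

/-- Support of a Borel measure on `ℝ`. -/
def msupport (μ : Measure ℝ) : Set ℝ := {x | ∀ U : Set ℝ, IsOpen U → x ∈ U → 0 < μ U}

/-- Partial sums `P_j = p_1 + ⋯ + p_j`. -/
def Psum (p : ℕ → ℝ) (j : ℕ) : ℝ := ∑ i ∈ Finset.Icc 1 j, p i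

/-- The total potential appearing in the vector equilibrium problem. -/
def eqWt (p : ℕ → ℝ) (lam : ℕ → Measure ℝ) (j : ℕ) (x : ℝ) : ℝ :=
  logPotential (lam j) x -
    (1 / 2) * ((Psum p (j - 1) / Psum p j) * logPotential (lam (j - 1)) x +
      (Psum p (j + 1) / Psum p j) * logPotential (lam (j + 1)) x)

/-- The vector equilibrium problem. -/
def IsVectEquil (m : ℕ) (a b : ℕ → ℝ) (p : ℕ → ℝ) (lam : ℕ → Measure ℝ) (ω : ℕ → ℝ) : Prop :=
  lam 0 = 0 ∧ lam (m + 1) = 0 ∧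
  ∀ j, 1 ≤ j → j ≤ m →
    IsProbabilityMeasure (lam j) ∧
    msupport (lam j) ⊆ Set.Icc (a j) (b j) ∧
    (∀ x ∈ msupport (lam j), eqWt p lam j x = ω j) ∧
    (∀ x ∈ Set.Icc (a j) (b j), ω j ≤ eqWt p lam j x)

/-- `Δ_j` as a subset of `ℂ` (with the convention `Δ_j = ∅` for `j ∉ {1,…,m}`). -/
def cSeg (m : ℕ) (a b : ℕ → ℝ) (j : ℕ) : Set ℂ :=
  if 1 ≤ j ∧ j ≤ m then {w : ℂ | w.im = 0 ∧ a j ≤ w.re ∧ w.re ≤ b j} else ∅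

/-- `Δ_j` as a subset of `ℝ` (with the convention `Δ_j = ∅` for `j ∉ {1,…,m}`). -/
def rSeg (m : ℕ) (a b : ℕ → ℝ) (j : ℕ) : Set ℝ :=
  if 1 ≤ j ∧ j ≤ m then Set.Icc (a j) (b j) else ∅

/-- `|n| = n_1 + ⋯ + n_m`. -/
def nsum (m : ℕ) (n : ℕ → ℕ) : ℕ := ∑ i ∈ Finset.Icc 1 m, n i

/-- `η_{n,j} = n_1 + ⋯ + n_j`. -/
def etaIdx (n : ℕ → ℕ) (j : ℕ) : ℕ := ∑ i ∈ Finset.Icc 1 j, n i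

/-- The linear forms `A_{n,j} = (-1)^j a_{n,j} + Σ_{k=j+1}^m (-1)^k a_{n,k} ŝ_{j+1,k}`. -/
def formA (m : ℕ) (σ : ℕ → Measure ℝ) (A : ℕ → Polynomial ℝ) (j : ℕ) (z : ℂ) : ℂ :=
  (-1 : ℂ) ^ j * Polynomial.aeval z (A j) +
    ∑ k ∈ Finset.Icc (j + 1) m, (-1 : ℂ) ^ k * Polynomial.aeval z (A k) * sHat σ (j + 1) k z

/-- `f(z) = O(z^{-N})` as `z → ∞`, i.e. `z^N f(z)` is bounded near `∞`. -/
def BoundedWithOrder (f : ℂ → ℂ) (N : ℕ) : Prop :=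
  ∃ C R : ℝ, ∀ z : ℂ, R ≤ ‖z‖ → ‖z ^ N * f z‖ ≤ C

/-- Multi-level Hermite–Padé polynomials associated with the multi-index `n`. -/
def IsMLHP (m : ℕ) (σ : ℕ → Measure ℝ) (n : ℕ → ℕ) (A : ℕ → Polynomial ℝ) : Prop :=
  0 < nsum m n ∧
  (∃ j, j ≤ m ∧ A j ≠ 0) ∧
  (∀ j, j < m → (A j).natDegree < nsum m n) ∧
  (A m).Monic ∧ (A m).natDegree ≤ nsum m n ∧
  ∀ j, j < m → BoundedWithOrder (formA m σ A j) (n (j + 1) + 1)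

/-- `Q_{n,j}`: the monic polynomial collecting the zeros of `A_{n,j}` in `ℂ ∖ Δ_{j+1}`;
they are simple and lie in the interior of `Δ_j`. -/
def IsQpoly (m : ℕ) (a b : ℕ → ℝ) (σ : ℕ → Measure ℝ) (n : ℕ → ℕ)
    (A : ℕ → Polynomial ℝ) (j : ℕ) (Q : Polynomial ℝ) : Prop :=
  Q.Monic ∧ Q.natDegree = etaIdx n j ∧ Squarefree Q ∧
  (∀ z : ℂ, Polynomial.aeval z Q = 0 →
    z.im = 0 ∧ a j < z.re ∧ z.re < b j ∧ formA m σ A j z = 0) ∧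
  (∀ z : ℂ, z ∉ cSeg m a b (j + 1) → formA m σ A j z = 0 → Polynomial.aeval z Q = 0)

/-- `H_{n,j} = Q_{n,j+1} A_{n,j} / Q_{n,j}`, with `H_{n,m} ≡ (-1)^m`. -/
def Hform (m : ℕ) (σ : ℕ → Measure ℝ) (A : ℕ → Polynomial ℝ) (Q : ℕ → Polynomial ℝ)
    (j : ℕ) (z : ℂ) : ℂ :=
  if j = m then (-1 : ℂ) ^ m
  else Polynomial.aeval z (Q (j + 1)) * formA m σ A j z / Polynomial.aeval z (Q j)

/-- The normalizing constants `K_{n,j}`. -/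
def Kconst (m : ℕ) (σ : ℕ → Measure ℝ) (A : ℕ → Polynomial ℝ) (Q : ℕ → Polynomial ℝ)
    (j : ℕ) : ℝ :=
  if j = m then 1
  else (∫ x, (Polynomial.eval x (Q (j + 1))) ^ 2 *
      ‖Hform m σ A Q (j + 1) (x : ℂ)‖ /
      |Polynomial.eval x (Q j) * Polynomial.eval x (Q (j + 2))| ∂(σ (j + 1))) ^ (-(1 / 2) : ℝ)

/-- `κ_{n,j} = K_{n,j-1} / K_{n,j}`. -/
def kappaC (m : ℕ) (σ : ℕ → Measure ℝ) (A : ℕ → Polynomial ℝ) (Q : ℕ → Polynomial ℝ)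
    (j : ℕ) : ℝ :=
  Kconst m σ A Q (j - 1) / Kconst m σ A Q j

/-- The measure on `(a,b)` with the given Lebesgue density. -/
def densMeasure (a b : ℝ) (ρ : ℝ → ℝ) : Measure ℝ :=
  (volume.restrict (Set.Ioo a b)).withDensity fun x => ENNReal.ofReal (ρ x)

/-- Density of the measure whose Szegő function is `G_j`. -/
def szegoVecDensity (m : ℕ) (a b : ℕ → ℝ) (σ : ℕ → Measure ℝ) (G : ℕ → ℂ → ℂ)
    (j : ℕ) (x : ℝ) : ℝ :=
  rnd (σ j) x /
    ((if j = m then 1 else Real.sqrt (|x - b (j + 1)| * |x - a (j + 1)|)) *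
      ‖G (j - 1) (x : ℂ)‖ * ‖G (j + 1) (x : ℂ)‖)

/-- The measure whose Szegő function is `G_j`. -/
def szegoVecMeasure (m : ℕ) (a b : ℕ → ℝ) (σ : ℕ → Measure ℝ) (G : ℕ → ℂ → ℂ)
    (j : ℕ) : Measure ℝ :=
  densMeasure (a j) (b j) (szegoVecDensity m a b σ G j)

/-- The vector `(G_1,…,G_m)` of Szegő functions solving the system of boundary
value problems (3.1) of the paper. -/
def IsSzegoVector (m : ℕ) (a b : ℕ → ℝ) (σ : ℕ → Measure ℝ) (G : ℕ → ℂ → ℂ) : Prop :=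
  (∀ z, G 0 z = 1) ∧ (∀ z, G (m + 1) z = 1) ∧
  ∀ j, 1 ≤ j → j ≤ m → G j = szegoFn (szegoVecMeasure m a b σ G j) (a j) (b j)

/-- `G_j(∞)`. -/
def szegoVecInf (m : ℕ) (a b : ℕ → ℝ) (σ : ℕ → Measure ℝ) (G : ℕ → ℂ → ℂ) (j : ℕ) : ℝ :=
  szegoInf (szegoVecMeasure m a b σ G j) (a j) (b j)

/-- Geometric data of the system of intervals: nondegenerate, consecutive ones disjoint. -/
def IntervalData (m : ℕ) (a b : ℕ → ℝ) : Prop :=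
  (∀ j, 1 ≤ j → j ≤ m → a j < b j) ∧
  (∀ j, 1 ≤ j → j < m → Set.Icc (a j) (b j) ∩ Set.Icc (a (j + 1)) (b (j + 1)) = ∅)

/-- Basic data of a Nikishin system of measures. -/
def NikishinData (m : ℕ) (a b : ℕ → ℝ) (σ : ℕ → Measure ℝ) : Prop :=
  IntervalData m a b ∧
  ∀ j, 1 ≤ j → j ≤ m →
    IsFiniteMeasure (σ j) ∧ σ j (Set.Icc (a j) (b j))ᶜ = 0 ∧ (msupport (σ j)).Infinite

/-- `p_1 > 0`, `p_1 ≥ p_2 ≥ ⋯ ≥ p_m ≥ 0`, `p_1 + ⋯ + p_m = 1`. -/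
def IsAdmissibleP (m : ℕ) (p : ℕ → ℝ) : Prop :=
  0 < p 1 ∧ (∀ j, 1 ≤ j → j < m → p (j + 1) ≤ p j) ∧
  (∀ j, 1 ≤ j → j ≤ m → 0 ≤ p j) ∧ ∑ i ∈ Finset.Icc 1 m, p i = 1

/-- A straight ray sequence of distinct multi-indices with `n_j = p_j |n|`. -/
def IsStraightRay (m : ℕ) (p : ℕ → ℝ) (N : ℕ → ℕ → ℕ) : Prop :=
  (∀ k l : ℕ, (∀ j, 1 ≤ j → j ≤ m → N k j = N l j) → k = l) ∧
  ∀ k, 0 < nsum m (N k) ∧ ∀ j, 1 ≤ j → j ≤ m → (N k j : ℝ) = p j * (nsum m (N k) : ℝ)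

/-- `Δ_{j-1} ∪ Δ_{j+1} ⊆ ℝ`. -/
def nbrSet (m : ℕ) (a b : ℕ → ℝ) (j : ℕ) : Set ℝ :=
  rSeg m a b (j - 1) ∪ rSeg m a b (j + 1)

/-- `Δ_{j-1} ∪ Δ_{j+1} ⊆ ℂ`. -/
def cNbrSet (m : ℕ) (a b : ℕ → ℝ) (j : ℕ) : Set ℂ :=
  cSeg m a b (j - 1) ∪ cSeg m a b (j + 1)

/-- Membership in `C⁺(Δ⃗)`. -/
def MemCplus (m : ℕ) (a b : ℕ → ℝ) (f : ℕ → ℝ → ℝ) : Prop :=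
  ∀ j, 1 ≤ j → j ≤ m →
    ContinuousOn (f j) (nbrSet m a b j) ∧ ∀ x ∈ nbrSet m a b j, 0 < f j x

/-- The metric `d` on `C⁺(Δ⃗)`. -/
def dC (m : ℕ) (a b : ℕ → ℝ) (f g : ℕ → ℝ → ℝ) : ℝ :=
  sSup {r | ∃ j, 1 ≤ j ∧ j ≤ m ∧ ∃ x ∈ nbrSet m a b j, r = |Real.log (f j x / g j x)|}

/-- The sup norm on `C(Δ⃗)`. -/
def normC (m : ℕ) (a b : ℕ → ℝ) (f : ℕ → ℝ → ℝ) : ℝ :=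
  sSup {r | ∃ j, 1 ≤ j ∧ j ≤ m ∧ ∃ x ∈ nbrSet m a b j, r = |f j x|}

/-- The (positive) values of a Szegő function on the real axis. -/
def realSzego (μ : Measure ℝ) (a b : ℝ) (x : ℝ) : ℝ := ‖szegoFn μ a b (x : ℂ)‖

/-- Density used in the definition of the operator `T_w`. -/
def TwDensity (m : ℕ) (a b : ℕ → ℝ) (w : ℕ → ℝ → ℝ) (f : ℕ → ℝ → ℝ) (j : ℕ) (x : ℝ) : ℝ :=
  w j x / (Real.sqrt ((b j - x) * (x - a j)) *
    (if 2 ≤ j then f (j - 1) x else 1) * (if j + 1 ≤ m then f (j + 1) x else 1))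

/-- The operator `T_w` on `C⁺(Δ⃗)`. -/
def Tw (m : ℕ) (a b : ℕ → ℝ) (w : ℕ → ℝ → ℝ) (f : ℕ → ℝ → ℝ) : ℕ → ℝ → ℝ := fun j x =>
  if 1 ≤ j ∧ j ≤ m then
    realSzego (densMeasure (a j) (b j) (TwDensity m a b w f j)) (a j) (b j) x
  else 1

/-- Szegő-class vector weights for the operator `T_w`. -/
def IsSzegoWeight (m : ℕ) (a b : ℕ → ℝ) (w : ℕ → ℝ → ℝ) : Prop :=
  ∀ j, 1 ≤ j → j ≤ m → (∀ x ∈ Set.Icc (a j) (b j), 0 ≤ w j x) ∧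
    IntegrableOn (fun x => Real.log (w j x) / Real.sqrt ((b j - x) * (x - a j)))
      (Set.Ioo (a j) (b j)) volume

/-- Membership in `P_n`: monic real polynomials `Q_j` of degree `η_{n,j}` with no zeros
on `Δ_{j-1} ∪ Δ_{j+1}`. -/
def MemPn (m : ℕ) (a b : ℕ → ℝ) (n : ℕ → ℕ) (Qt : ℕ → Polynomial ℝ) : Prop :=
  Qt 0 = 1 ∧ Qt (m + 1) = 1 ∧
  ∀ j, 1 ≤ j → j ≤ m → (Qt j).Monic ∧ (Qt j).natDegree = etaIdx n j ∧
    ∀ z : ℂ, Polynomial.aeval z (Qt j) = 0 → z ∉ cNbrSet m a b j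

/-- Generic normalizing constants `K_j(Q⃗*)`. -/
def KcGen (m : ℕ) (σ : ℕ → Measure ℝ) (Qt Qs : ℕ → Polynomial ℝ) (H : ℕ → ℂ → ℂ)
    (j : ℕ) : ℝ :=
  if j = m then 1
  else (∫ x, (Polynomial.eval x (Qs (j + 1))) ^ 2 * ‖H (j + 1) (x : ℂ)‖ /
      |Polynomial.eval x (Qt j) * Polynomial.eval x (Qt (j + 2))| ∂(σ (j + 1))) ^ (-(1 / 2) : ℝ)

/-- `κ_j(Q⃗*) = K_{j-1}(Q⃗*) / K_j(Q⃗*)`. -/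
def kappaGen (m : ℕ) (σ : ℕ → Measure ℝ) (Qt Qs : ℕ → Polynomial ℝ) (H : ℕ → ℂ → ℂ)
    (j : ℕ) : ℝ :=
  KcGen m σ Qt Qs H (j - 1) / KcGen m σ Qt Qs H j

/-- The measure `ρ_j` with density `h̃_j σ_j' / (f_{j-1} f_{j+1})` on `Δ_j`. -/
def rhoMeas (m : ℕ) (a b : ℕ → ℝ) (σ : ℕ → Measure ℝ) (f : ℕ → ℝ → ℝ) (j : ℕ) : Measure ℝ :=
  densMeasure (a j) (b j) fun x =>
    (if j = m then 1 else (Real.sqrt (|x - b (j + 1)| * |x - a (j + 1)|))⁻¹) * rnd (σ j) x /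
      (f (j - 1) x * f (j + 1) x)

/-- The forms `A_j = a_j + Σ_{k=j+1}^m a_k ŝ_{j+1,k}` (without alternating signs). -/
def formGen (m : ℕ) (σ : ℕ → Measure ℝ) (aP : ℕ → Polynomial ℝ) (j : ℕ) (z : ℂ) : ℂ :=
  Polynomial.aeval z (aP j) +
    ∑ k ∈ Finset.Icc (j + 1) m, Polynomial.aeval z (aP k) * sHat σ (j + 1) k z

/-- Auxiliary iterated Cauchy kernel. -/
def kern (σ : ℕ → Measure ℝ) : ℕ → ℕ → ℝ → ℝ → ℝ
  | 0, _ => fun x y => 1 / (x - y)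
  | g + 1, i => fun x y => ∫ t, kern σ g (i + 1) t y / (x - t) ∂(σ i)

/-- The Cauchy biorthogonality kernel `K(x_1, x_m)`. -/
def biKernel (σ : ℕ → Measure ℝ) (m : ℕ) (x y : ℝ) : ℝ :=
  if m = 2 then 1 else kern σ (m - 2) 2 x y

/-- Walks of length `L` on the path graph `{1,…,m}` starting at `r`
(encoded as sequences vanishing after time `L`). -/
def walkSet (m L r : ℕ) : Set (ℕ → ℕ) :=
  {β | β 0 = r ∧ (∀ i, i ≤ L → 1 ≤ β i ∧ β i ≤ m) ∧
    (∀ i, i < L → β (i + 1) = β i + 1 ∨ β i = β (i + 1) + 1) ∧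
    ∀ i, L < i → β i = 0}

end

/-!
Record a walk of length `L` by its sequence of steps (`true` = up). After `i` steps with `u` up-steps the
walk is at `r + 2u - i`, so a step sequence is a walk on `{1,…,m}` unless it leaves the path, and
`N(r) = 2^L - #(escaping step sequences)`. For `m ≤ 2L` every start admits an escaping sequence (all down
or all up), and for `m < 2L` at least two; from the centre `r = L` the only escaping sequences are the two
constant ones, and the all-up one escapes only when `m < 2L`. Since `L = ⌈m/2⌉` gives `m = 2L - 1` or
`m = 2L`, the centre attains the bound.
-/

namespace StepSeq

def upCount (s : ℕ → Bool) (i : ℕ) : ℕ := ((Finset.range i).filter fun j => s j = true).card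

lemma upCount_zero (s : ℕ → Bool) : upCount s 0 = 0 := by simp [upCount]

lemma upCount_succ (s : ℕ → Bool) (i : ℕ) :
    upCount s (i + 1) = upCount s i + if s i then 1 else 0 := by
  unfold upCount
  rw [Finset.range_add_one, Finset.filter_insert]
  split_ifs with h
  · rw [Finset.card_insert_of_notMem (by simp)]
  · rfl

lemma upCount_le (s : ℕ → Bool) (i : ℕ) : upCount s i ≤ i :=
  (Finset.card_filter_le _ _).trans (Finset.card_range i).le

lemma upCount_eq_zero_iff {s : ℕ → Bool} {i : ℕ} : upCount s i = 0 ↔ ∀ j < i, s j = false := by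
  simp [upCount]

lemma upCount_eq_self_iff {s : ℕ → Bool} {i : ℕ} : upCount s i = i ↔ ∀ j < i, s j = true := by
  have h := Finset.card_filter_eq_iff (s := Finset.range i) (p := fun j => s j = true)
  rw [Finset.card_range] at h
  simpa [upCount] using h

lemma eq_of_upCount_eq {s s' : ℕ → Bool} {L : ℕ} (h : ∀ i ≤ L, upCount s i = upCount s' i)
    {j : ℕ} (hj : j < L) : s j = s' j := by
  have hsucc := h (j + 1) hj
  rw [upCount_succ, upCount_succ, h j hj.le] at hsucc
  cases hs : s j <;> cases hs' : s' j <;> simp_all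

/-- The walk stays in `{1,…,m}` for `L` steps: `1 ≤ r + 2u - i ≤ m`, written without truncated
subtraction. -/
def StaysIn (m L r : ℕ) (s : ℕ → Bool) : Prop :=
  ∀ i ≤ L, i + 1 ≤ r + 2 * upCount s i ∧ r + 2 * upCount s i ≤ m + i

def walkOfSteps (L r : ℕ) (s : ℕ → Bool) (i : ℕ) : ℕ :=
  if i ≤ L then r + 2 * upCount s i - i else 0

def padSteps {L : ℕ} (s : Fin L → Bool) (j : ℕ) : Bool := if h : j < L then s ⟨j, h⟩ else false

lemma forall_padSteps_eq_iff {L : ℕ} {s : Fin L → Bool} {b : Bool} :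
    (∀ j < L, padSteps s j = b) ↔ s = fun _ => b := by
  constructor
  · intro h
    funext j
    simpa [padSteps, j.isLt] using h j j.isLt
  · rintro rfl j hj
    simp [padSteps, hj]

def staySet (m L r : ℕ) : Set (Fin L → Bool) := {s | StaysIn m L r (padSteps s)}

variable {m L r : ℕ}

lemma walkOfSteps_mem_walkSet {s : ℕ → Bool} (hs : StaysIn m L r s) :
    walkOfSteps L r s ∈ walkSet m L r := by
  refine ⟨by simp [walkOfSteps, upCount_zero], fun i hi => ?_, fun i hi => ?_, fun i hi => ?_⟩
  · have := hs i hi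
    simp only [walkOfSteps, if_pos hi]
    omega
  · have := hs i hi.le
    simp only [walkOfSteps, if_pos hi.le, if_pos (Nat.succ_le_of_lt hi), upCount_succ]
    cases s i <;> simp only [Bool.false_eq_true, ↓reduceIte, add_zero] <;> omega
  · simp [walkOfSteps, hi.not_ge]

lemma exists_staySet_of_mem_walkSet {β : ℕ → ℕ} (hβ : β ∈ walkSet m L r) :
    ∃ s ∈ staySet m L r, walkOfSteps L r (padSteps s) = β := by
  obtain ⟨h0, hrange, hstep, hzero⟩ := hβ
  set s : Fin L → Bool := fun j => decide (β (j + 1) = β j + 1)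
  have hpos : ∀ i ≤ L, β i + i = r + 2 * upCount (padSteps s) i := by
    intro i
    induction i with
    | zero => simp [h0, upCount_zero]
    | succ i ih =>
      intro hi
      have hs : padSteps s i = decide (β (i + 1) = β i + 1) := by
        simp [padSteps, s, show i < L by omega]
      have := ih (by omega)
      rw [upCount_succ, hs]
      rcases hstep i hi with h | h
      · simp only [h, decide_true, ↓reduceIte]; omega
      · simp only [show β (i + 1) ≠ β i + 1 by omega, decide_false, Bool.false_eq_true,
          ↓reduceIte]; omega
  refine ⟨s, fun i hi => ?_, funext fun i => ?_⟩
  · have := hrange i hi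
    have := hpos i hi
    omega
  · by_cases hi : i ≤ L
    · have := hpos i hi
      simp only [walkOfSteps, if_pos hi]
      omega
    · simp [walkOfSteps, hi, hzero i (by omega)]

lemma injOn_walkOfSteps :
    Set.InjOn (fun s : Fin L → Bool => walkOfSteps L r (padSteps s)) (staySet m L r) := by
  intro s hs s' hs' h
  have hup : ∀ i ≤ L, upCount (padSteps s) i = upCount (padSteps s') i := by
    intro i hi
    have := (hs i hi).1
    have := (hs' i hi).1
    have := congrFun h i
    simp only [walkOfSteps, if_pos hi] at this
    omega
  funext j
  simpa [padSteps, j.isLt] using eq_of_upCount_eq hup j.isLt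

lemma walkSet_eq_image :
    walkSet m L r = (fun s => walkOfSteps L r (padSteps s)) '' staySet m L r := by
  ext β
  constructor
  · exact exists_staySet_of_mem_walkSet
  · rintro ⟨s, hs, rfl⟩
    exact walkOfSteps_mem_walkSet hs

theorem ncard_walkSet_add_ncard_compl_staySet :
    (walkSet m L r).ncard + (staySet m L r)ᶜ.ncard = 2 ^ L := by
  rw [walkSet_eq_image, injOn_walkOfSteps.ncard_image, Set.ncard_add_ncard_compl,
    Nat.card_eq_fintype_card]
  simp

lemma not_staysIn_of_forall_lt_eq_false {s : ℕ → Bool} {i : ℕ} (hi : i ≤ L) (hr : r ≤ i)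
    (hs : ∀ j < i, s j = false) : ¬ StaysIn m L r s := fun h => by
  have := (h i hi).1
  rw [upCount_eq_zero_iff.2 hs] at this
  omega

lemma not_staysIn_of_forall_lt_eq_true {s : ℕ → Bool} {i : ℕ} (hi : i ≤ L) (hr : m < r + i)
    (hs : ∀ j < i, s j = true) : ¬ StaysIn m L r s := fun h => by
  have := (h i hi).2
  rw [upCount_eq_self_iff.2 hs] at this
  omega

lemma const_false_notMem_staySet (hr : r ≤ L) : (fun _ => false) ∉ staySet m L r :=
  not_staysIn_of_forall_lt_eq_false le_rfl hr (forall_padSteps_eq_iff.2 rfl)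

lemma const_true_notMem_staySet (hr : m < r + L) : (fun _ => true) ∉ staySet m L r :=
  not_staysIn_of_forall_lt_eq_true le_rfl hr (forall_padSteps_eq_iff.2 rfl)

theorem one_le_ncard_compl_staySet (hm : m ≤ 2 * L) : 1 ≤ (staySet m L r)ᶜ.ncard := by
  refine Nat.one_le_iff_ne_zero.2 ((Set.ncard_pos (Set.toFinite _)).2 ?_).ne'
  rcases le_or_gt r L with hr | hr
  · exact ⟨_, const_false_notMem_staySet hr⟩
  · exact ⟨_, const_true_notMem_staySet (by omega)⟩

theorem two_le_ncard_compl_staySet (hL : 1 ≤ L) (hm : m < 2 * L) :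
    2 ≤ (staySet m L r)ᶜ.ncard := by
  have hlast : (⟨L - 1, by omega⟩ : Fin L).val + 1 = L := Nat.sub_add_cancel hL
  rcases lt_trichotomy r L with hr | rfl | hr
  · -- both go below `1` during the first `L - 1` steps, which are down
    refine (Set.one_lt_ncard_iff (Set.toFinite _)).2 ⟨_, fun j => decide (j.val + 1 = L),
      const_false_notMem_staySet hr.le,
      not_staysIn_of_forall_lt_eq_false (i := L - 1) (by omega) (by omega) fun j hj => ?_,
      fun h => by simpa [hlast] using congrFun h ⟨L - 1, by omega⟩⟩
    simp [padSteps, show j < L by omega, show j + 1 ≠ L by omega]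
  · exact (Set.one_lt_ncard_iff (Set.toFinite _)).2 ⟨_, _, const_false_notMem_staySet le_rfl,
      const_true_notMem_staySet (by omega), fun h => by simpa using congrFun h ⟨0, hL⟩⟩
  · -- both go above `m` during the first `L - 1` steps, which are up
    refine (Set.one_lt_ncard_iff (Set.toFinite _)).2 ⟨_, fun j => decide (j.val + 1 ≠ L),
      const_true_notMem_staySet (by omega),
      not_staysIn_of_forall_lt_eq_true (i := L - 1) (by omega) (by omega) fun j hj => ?_,
      fun h => by simpa [hlast] using congrFun h ⟨L - 1, by omega⟩⟩
    simp [padSteps, show j < L by omega, show j + 1 ≠ L by omega]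

lemma upCount_of_not_staysIn_center {s : ℕ → Bool} (hm : 2 * L ≤ m + 1)
    (h : ¬ StaysIn m L L s) : upCount s L = 0 ∨ (m < 2 * L ∧ upCount s L = L) := by
  simp only [StaysIn, not_forall, Classical.not_and_iff_not_or_not, not_le] at h
  obtain ⟨i, hi, hlow | hhigh⟩ := h
  · obtain rfl : i = L := by omega
    omega
  · have := upCount_le s i
    obtain rfl : i = L := by omega
    omega

lemma compl_staySet_center_subset (hm : 2 * L ≤ m + 1) :
    (staySet m L L)ᶜ ⊆ {fun _ => false, fun _ => true} := by
  intro s hs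
  rcases upCount_of_not_staysIn_center hm hs with h | ⟨-, h⟩
  · exact .inl (forall_padSteps_eq_iff.1 (upCount_eq_zero_iff.1 h))
  · exact .inr (forall_padSteps_eq_iff.1 (upCount_eq_self_iff.1 h))

lemma compl_staySet_center_subset_of_le (hm : 2 * L ≤ m) :
    (staySet m L L)ᶜ ⊆ {fun _ => false} := by
  intro s hs
  rcases upCount_of_not_staysIn_center (by omega) hs with h | ⟨hlt, -⟩
  · exact forall_padSteps_eq_iff.1 (upCount_eq_zero_iff.1 h)
  · omega

theorem isGreatest_ncard_walkSet {c : ℕ} (hL : 1 ≤ L) (hLm : L ≤ m)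
    (hc : ∀ r, c ≤ (staySet m L r)ᶜ.ncard) (hcenter : (staySet m L L)ᶜ.ncard ≤ c) :
    IsGreatest ((fun r => (walkSet m L r).ncard) '' Set.Icc 1 m) (2 ^ L - c) := by
  have hcount := fun r => ncard_walkSet_add_ncard_compl_staySet (m := m) (L := L) (r := r)
  refine ⟨⟨L, ⟨hL, hLm⟩, ?_⟩, ?_⟩
  · have := hc L
    have := hcount L
    dsimp only
    omega
  · rintro _ ⟨r, -, rfl⟩
    have := hc r
    have := hcount r
    dsimp only
    omega

end StepSeq

open StepSeq in
/-- The combinatorial count behind Theorem 1.5: the maximal number of walks of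
length `m̄ = ⌈m/2⌉` on the path graph `{1,…,m}` starting at some vertex `r` is
`2^m̄ - 2` for odd `m` and `2^m̄ - 1` for even `m` (`m ≥ 3`). -/
theorem max_walk_count (m : ℕ) (hm : 3 ≤ m) :
    IsGreatest ((fun r => (walkSet m ((m + 1) / 2) r).ncard) '' Set.Icc 1 m)
      (if m % 2 = 1 then 2 ^ ((m + 1) / 2) - 2 else 2 ^ ((m + 1) / 2) - 1) := by
  split_ifs with hodd
  · refine isGreatest_ncard_walkSet (by omega) (by omega)
      (fun r => two_le_ncard_compl_staySet (by omega) (by omega)) ?_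
    calc _ ≤ ({fun _ => false, fun _ => true} : Set (Fin ((m + 1) / 2) → Bool)).ncard :=
          Set.ncard_le_ncard (compl_staySet_center_subset (by omega))
      _ ≤ 2 := (Set.ncard_insert_le _ _).trans (by simp)
  · refine isGreatest_ncard_walkSet (by omega) (by omega)
      (fun r => one_le_ncard_compl_staySet (by omega)) ?_
    calc _ ≤ ({fun _ => false} : Set (Fin ((m + 1) / 2) → Bool)).ncard :=
          Set.ncard_le_ncard (compl_staySet_center_subset_of_le (by omega))
      _ = 1 := Set.ncard_singleton _
end

section
/- Let a_0,…,a_m be real polynomials and let Q be a monic polynomial with real coefficients all of whose roots lie in ℂ∖Δ_1. Set A_0 := a_0 + Σ_{k=1}^m a_k ŝ_{1,k} and A_1 := a_1 + Σ_{k=2}^m a_k ŝ_{2,k}. Suppose A_0/Q is holomorphic in ℂ∖Δ_1 and that for some integer N ≥ 1 the function z^N·A_0(z)/Q(z) remains bounded as z → ∞. Then for every z ∈ ℂ∖Δ_1, A_0(z)/Q(z) = ∫ A_1(x)/((z−x) Q(x)) dσ_1(x). -/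
open MeasureTheory Filter Topology

/-!
Write `ŝ_{1,k}(z) = ∫ ŝ_{2,k}(x) / (z - x) dσ₁(x)` and expand `a_k(z) = a_k(x) + (z - x) D_k(z, x)`
with a divided difference `D_k` that is polynomial in both variables: the Cauchy integral of `A₁`
against `σ₁` differs from `A₀` by a polynomial, and `Q(z) ∫ A₁(x) / ((z - x) Q(x)) dσ₁(x)` differs
from that Cauchy integral by a polynomial. Hence `H = A₀ / Q - ∫ A₁(x) / ((z - x) Q(x)) dσ₁(x)`
equals `P / Q` for a polynomial `P` away from `Δ₁`. As `Q` has no zeros on `Δ₁`, `P / Q` continues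
`H` across `Δ₁` to an entire function which vanishes at `∞`, so `H = 0` by Liouville's theorem.
-/

open Polynomial

def divDiff (p : ℂ[X]) (z x : ℂ) : ℂ :=
  ∑ j ∈ Finset.range (p.natDegree + 1), p.coeff j * ∑ i ∈ Finset.range j, z ^ i * x ^ (j - 1 - i)

lemma sub_mul_divDiff (p : ℂ[X]) (z x : ℂ) :
    (z - x) * divDiff p z x = p.eval z - p.eval x := by
  rw [divDiff, Finset.mul_sum, eval_eq_sum_range, eval_eq_sum_range, ← Finset.sum_sub_distrib]
  refine Finset.sum_congr rfl fun j _ => ?_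
  rw [mul_left_comm, mul_comm (z - x), geom_sum₂_mul, mul_sub]

lemma continuous_divDiff (p : ℂ[X]) (z : ℂ) : Continuous (divDiff p z) := by
  unfold divDiff
  fun_prop

lemma exists_integral_divDiff_mul_eq_eval (μ : Measure ℝ) (p : ℂ[X]) {w : ℝ → ℂ}
    (hw : ∀ n : ℕ, Integrable (fun x : ℝ => (x : ℂ) ^ n * w x) μ) :
    ∃ P : ℂ[X], ∀ z : ℂ, ∫ x : ℝ, divDiff p z x * w x ∂μ = P.eval z := by
  refine ⟨∑ j ∈ Finset.range (p.natDegree + 1), ∑ i ∈ Finset.range j,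
    C (p.coeff j * ∫ x : ℝ, (x : ℂ) ^ (j - 1 - i) * w x ∂μ) * X ^ i, fun z => ?_⟩
  have hexpand : (fun x : ℝ => divDiff p z x * w x) = fun x : ℝ =>
      ∑ j ∈ Finset.range (p.natDegree + 1), ∑ i ∈ Finset.range j,
        (p.coeff j * z ^ i) * ((x : ℂ) ^ (j - 1 - i) * w x) := by
    ext x
    simp only [divDiff, Finset.sum_mul, Finset.mul_sum]
    exact Finset.sum_congr rfl fun j _ => Finset.sum_congr rfl fun i _ => by ring
  rw [hexpand,
    integral_finsetSum _ fun j _ => integrable_finsetSum _ fun i _ => (hw _).const_mul _]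
  simp only [eval_finsetSum, eval_mul, eval_C, eval_pow, eval_X]
  refine Finset.sum_congr rfl fun j _ => ?_
  rw [integral_finsetSum _ fun i _ => (hw _).const_mul _]
  refine Finset.sum_congr rfl fun i _ => ?_
  rw [integral_const_mul]
  ring

section CompactlySupported

variable {μ : Measure ℝ} {K : Set ℝ}

lemma ContinuousOn.aestronglyMeasurable_of_ae_mem {φ : ℝ → ℂ} (hφ : ContinuousOn φ K)
    (hK : IsCompact K) (hμK : ∀ᵐ x ∂μ, x ∈ K) : AEStronglyMeasurable φ μ := by
  rw [← Measure.restrict_eq_self_of_ae_mem hμK]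
  exact hφ.aestronglyMeasurable hK.measurableSet

lemma ContinuousOn.integrable_mul_of_ae_mem {φ w : ℝ → ℂ} (hφ : ContinuousOn φ K)
    (hK : IsCompact K) (hμK : ∀ᵐ x ∂μ, x ∈ K) (hw : Integrable w μ) :
    Integrable (fun x => φ x * w x) μ := by
  obtain ⟨C, hC⟩ := hK.exists_bound_of_continuousOn hφ
  exact hw.bdd_mul (hφ.aestronglyMeasurable_of_ae_mem hK hμK) (hμK.mono hC)

lemma ContinuousOn.integrable_of_ae_mem [IsFiniteMeasure μ] {φ : ℝ → ℂ}
    (hφ : ContinuousOn φ K) (hK : IsCompact K) (hμK : ∀ᵐ x ∂μ, x ∈ K) : Integrable φ μ := by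
  simpa using hφ.integrable_mul_of_ae_mem hK hμK (integrable_const 1)

lemma sub_ofReal_ne_zero {z : ℂ} (hz : z ∉ ((↑) : ℝ → ℂ) '' K) {x : ℝ} (hx : x ∈ K) :
    z - x ≠ 0 :=
  fun h => hz ⟨x, hx, (sub_eq_zero.1 h).symm⟩

lemma continuousOn_inv_sub_ofReal {z : ℂ} (hz : z ∉ ((↑) : ℝ → ℂ) '' K) :
    ContinuousOn (fun x : ℝ => (z - x)⁻¹) K :=
  (continuous_const.sub Complex.continuous_ofReal).continuousOn.inv₀
    fun _ hx => sub_ofReal_ne_zero hz hx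

end CompactlySupported

section CauchyIntegral

variable {μ : Measure ℝ} {K : Set ℝ} {w : ℝ → ℂ}

noncomputable def cauchyInt (μ : Measure ℝ) (w : ℝ → ℂ) (z : ℂ) : ℂ := ∫ x, w x / (z - x) ∂μ

lemma integrable_div_sub_ofReal (hK : IsCompact K) (hμK : ∀ᵐ x ∂μ, x ∈ K)
    (hw : Integrable w μ) {z : ℂ} (hz : z ∉ ((↑) : ℝ → ℂ) '' K) :
    Integrable (fun x : ℝ => w x / (z - x)) μ := by
  simpa only [div_eq_inv_mul] using
    (continuousOn_inv_sub_ofReal hz).integrable_mul_of_ae_mem hK hμK hw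

lemma differentiableOn_cauchyInt (hK : IsCompact K) (hμK : ∀ᵐ x ∂μ, x ∈ K)
    (hw : Integrable w μ) : DifferentiableOn ℂ (cauchyInt μ w) (((↑) : ℝ → ℂ) '' K)ᶜ := by
  intro z₀ hz₀
  have hopen : IsOpen (((↑) : ℝ → ℂ) '' K)ᶜ :=
    (hK.image Complex.continuous_ofReal).isClosed.isOpen_compl
  obtain ⟨ε, hε, hball⟩ := Metric.isOpen_iff.1 hopen z₀ hz₀
  have hdist : ∀ x ∈ K, ∀ z ∈ Metric.ball z₀ (ε / 2), ε / 2 ≤ ‖z - x‖ := by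
    intro x hx z hz
    have hx' : ε ≤ dist (x : ℂ) z₀ := not_lt.1 fun h => hball h ⟨x, hx, rfl⟩
    rw [Metric.mem_ball] at hz
    rw [← dist_eq_norm]
    linarith [dist_triangle (x : ℂ) z z₀, dist_comm (x : ℂ) z]
  have hderiv := hasDerivAt_integral_of_dominated_loc_of_deriv_le (μ := μ)
    (F := fun z x => w x / (z - x)) (F' := fun z x => -(z - x)⁻¹ ^ 2 * w x)
    (bound := fun x => (ε / 2)⁻¹ ^ 2 * ‖w x‖) (Metric.ball_mem_nhds z₀ (half_pos hε))
    ?_ (integrable_div_sub_ofReal hK hμK hw hz₀) ?_ ?_ (hw.norm.const_mul _) ?_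
  · exact hderiv.2.differentiableAt.differentiableWithinAt
  · filter_upwards [hopen.mem_nhds hz₀] with z hz
    exact (integrable_div_sub_ofReal hK hμK hw hz).aestronglyMeasurable
  · exact (((continuousOn_inv_sub_ofReal hz₀).pow 2).neg.aestronglyMeasurable_of_ae_mem hK
      hμK).mul hw.aestronglyMeasurable
  · filter_upwards [hμK] with x hx z hz
    rw [norm_mul, norm_neg, norm_pow, norm_inv]
    gcongr
    exact hdist x hx z hz
  · filter_upwards [hμK] with x hx z hz
    have hne : z - x ≠ 0 := norm_pos_iff.1 ((half_pos hε).trans_le (hdist x hx z hz))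
    have h := (((hasDerivAt_id z).sub_const (x : ℂ)).fun_inv hne).const_mul (w x)
    simp only [id, ← div_eq_mul_inv] at h
    exact h.congr_deriv (by field_simp)

lemma tendsto_cauchyInt_cocompact (hK : IsCompact K) (hμK : ∀ᵐ x ∂μ, x ∈ K)
    (hw : Integrable w μ) : Tendsto (cauchyInt μ w) (cocompact ℂ) (𝓝 0) := by
  obtain ⟨R, hR⟩ := hK.isBounded.subset_closedBall 0
  have hbound : ∀ z : ℂ, R < ‖z‖ →
      ‖cauchyInt μ w z‖ ≤ (∫ x, ‖w x‖ ∂μ) * (‖z‖ - R)⁻¹ := by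
    intro z hz
    rw [← integral_mul_const]
    refine norm_integral_le_of_norm_le (hw.norm.mul_const _) ?_
    filter_upwards [hμK] with x hx
    have hxR : ‖z‖ - R ≤ ‖z - x‖ := by
      have hx' : ‖(x : ℂ)‖ ≤ R := by simpa using hR hx
      linarith [norm_sub_norm_le z (x : ℂ)]
    rw [norm_div, div_eq_mul_inv]
    gcongr
  rw [tendsto_zero_iff_norm_tendsto_zero]
  refine squeeze_zero' (Eventually.of_forall fun z => norm_nonneg _)
    ((tendsto_norm_cocompact_atTop.eventually_gt_atTop R).mono hbound) ?_
  simpa [sub_eq_add_neg] using (tendsto_inv_atTop_zero.comp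
    (tendsto_atTop_add_const_right _ (-R) tendsto_norm_cocompact_atTop)).const_mul
      (∫ x, ‖w x‖ ∂μ)

lemma cauchyInt_add {v : ℝ → ℂ} (hK : IsCompact K) (hμK : ∀ᵐ x ∂μ, x ∈ K)
    (hv : Integrable v μ) (hw : Integrable w μ) {z : ℂ} (hz : z ∉ ((↑) : ℝ → ℂ) '' K) :
    cauchyInt μ (fun x => v x + w x) z = cauchyInt μ v z + cauchyInt μ w z := by
  simp only [cauchyInt, add_div]
  exact integral_add (integrable_div_sub_ofReal hK hμK hv hz)
    (integrable_div_sub_ofReal hK hμK hw hz)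

lemma cauchyInt_finsetSum {ι : Type*} (s : Finset ι) {v : ι → ℝ → ℂ} (hK : IsCompact K)
    (hμK : ∀ᵐ x ∂μ, x ∈ K) (hv : ∀ i ∈ s, Integrable (v i) μ) {z : ℂ}
    (hz : z ∉ ((↑) : ℝ → ℂ) '' K) :
    cauchyInt μ (fun x => ∑ i ∈ s, v i x) z = ∑ i ∈ s, cauchyInt μ (v i) z := by
  simp only [cauchyInt, Finset.sum_div]
  exact integral_finsetSum s fun i hi => integrable_div_sub_ofReal hK hμK (hv i hi) hz

lemma exists_cauchyInt_eval_mul_eq (hK : IsCompact K) (hμK : ∀ᵐ x ∂μ, x ∈ K)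
    (hw : Integrable w μ) (p : ℂ[X]) :
    ∃ P : ℂ[X], ∀ z ∉ ((↑) : ℝ → ℂ) '' K,
      cauchyInt μ (fun x => p.eval ↑x * w x) z = p.eval z * cauchyInt μ w z - P.eval z := by
  obtain ⟨P, hP⟩ := exists_integral_divDiff_mul_eq_eval μ p fun n =>
    (Complex.continuous_ofReal.pow n).continuousOn.integrable_mul_of_ae_mem hK hμK hw
  refine ⟨P, fun z hz => ?_⟩
  have hsplit : ∀ᵐ x : ℝ ∂μ, p.eval (x : ℂ) * w x / (z - x) =
      p.eval z * (w x / (z - x)) - divDiff p z x * w x := by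
    filter_upwards [hμK] with x hx
    have hne := sub_ofReal_ne_zero hz hx
    have hdiff := sub_mul_divDiff p z x
    field_simp
    linear_combination (w x) * hdiff
  have hdiv : Integrable (fun x : ℝ => divDiff p z x * w x) μ :=
    ((continuous_divDiff p z).comp Complex.continuous_ofReal).continuousOn
      |>.integrable_mul_of_ae_mem hK hμK hw
  rw [cauchyInt, integral_congr_ae hsplit,
    integral_sub ((integrable_div_sub_ofReal hK hμK hw hz).const_mul _) hdiv,
    integral_const_mul, hP, cauchyInt]

lemma exists_eval_mul_cauchyInt_div_eq (hK : IsCompact K) (hμK : ∀ᵐ x ∂μ, x ∈ K)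
    (hw : Integrable w μ) (q : ℂ[X]) (hq : ∀ x ∈ K, q.eval (x : ℂ) ≠ 0) :
    ∃ P : ℂ[X], ∀ z ∉ ((↑) : ℝ → ℂ) '' K,
      q.eval z * cauchyInt μ (fun x => w x / q.eval ↑x) z = cauchyInt μ w z + P.eval z := by
  have hwq : Integrable (fun x => w x / q.eval ↑x) μ := by
    have hinv : ContinuousOn (fun x : ℝ => (q.eval (x : ℂ))⁻¹) K :=
      (q.continuous.comp Complex.continuous_ofReal).continuousOn.inv₀ hq
    simpa only [div_eq_inv_mul] using hinv.integrable_mul_of_ae_mem hK hμK hw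
  obtain ⟨P, hP⟩ := exists_cauchyInt_eval_mul_eq hK hμK hwq q
  refine ⟨P, fun z hz => ?_⟩
  have hcancel : cauchyInt μ (fun x => q.eval ↑x * (w x / q.eval ↑x)) z = cauchyInt μ w z :=
    integral_congr_ae (hμK.mono fun x hx => by simp only [mul_div_cancel₀ _ (hq x hx)])
  rw [← hcancel, hP z hz]
  ring

end CauchyIntegral

lemma BoundedWithOrder.tendsto_cocompact {f : ℂ → ℂ} {N : ℕ} (hf : BoundedWithOrder f N)
    (hN : 1 ≤ N) : Tendsto f (cocompact ℂ) (𝓝 0) := by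
  obtain ⟨C, R, hCR⟩ := hf
  have hbound : ∀ z : ℂ, max R 1 ≤ ‖z‖ → ‖f z‖ ≤ C * ‖z‖⁻¹ := by
    intro z hz
    have hz1 : 1 ≤ ‖z‖ := (le_max_right _ _).trans hz
    have h := hCR z ((le_max_left _ _).trans hz)
    rw [norm_mul, norm_pow] at h
    rw [← div_eq_mul_inv, le_div_iff₀ (by positivity)]
    calc ‖f z‖ * ‖z‖ ≤ ‖z‖ ^ N * ‖f z‖ := by
          rw [mul_comm]; gcongr; exact le_self_pow₀ hz1 (by omega)
      _ ≤ C := h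
  rw [tendsto_zero_iff_norm_tendsto_zero]
  refine squeeze_zero' (Eventually.of_forall fun z => norm_nonneg _)
    ((tendsto_norm_cocompact_atTop.eventually_ge_atTop _).mono hbound) ?_
  simpa using (tendsto_inv_atTop_zero.comp tendsto_norm_cocompact_atTop).const_mul C

lemma eqOn_zero_of_eq_div_of_tendsto_cocompact {S : Set ℂ} (hS : IsCompact S) {H : ℂ → ℂ}
    (hH : DifferentiableOn ℂ H Sᶜ) {P Q : ℂ[X]} (hQ : ∀ z ∈ S, Q.eval z ≠ 0)
    (hHPQ : ∀ z ∉ S, Q.eval z ≠ 0 → H z = P.eval z / Q.eval z)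
    (hlim : Tendsto H (cocompact ℂ) (𝓝 0)) : ∀ z ∉ S, H z = 0 := by
  classical
  -- `E` extends `H` across `S` by `P / Q` to an entire function; Liouville does the rest.
  set E : ℂ → ℂ := S.piecewise (fun z => P.eval z / Q.eval z) H with hE
  have hEdiff : Differentiable ℂ E := by
    intro z
    by_cases hz : z ∈ S
    · have hEq : E =ᶠ[𝓝 z] fun w => P.eval w / Q.eval w := by
        filter_upwards [Q.continuous.continuousAt.eventually_ne (hQ z hz)] with w hw
        by_cases hwS : w ∈ S
        · simp [E, hwS]
        · simp [E, hwS, hHPQ w hwS hw]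
      exact hEq.differentiableAt_iff.2
        (P.differentiable.differentiableAt.div Q.differentiable.differentiableAt (hQ z hz))
    · have hopen : IsOpen Sᶜ := hS.isClosed.isOpen_compl
      have hEq : E =ᶠ[𝓝 z] H := by
        filter_upwards [hopen.mem_nhds hz] with w hw
        simp [E, Set.piecewise_eq_of_notMem _ _ _ hw]
      exact hEq.differentiableAt_iff.2 (hH.differentiableAt (hopen.mem_nhds hz))
  have hElim : Tendsto E (cocompact ℂ) (𝓝 0) := by
    refine hlim.congr' ?_
    filter_upwards [hS.compl_mem_cocompact] with w hw
    simp [E, Set.piecewise_eq_of_notMem _ _ _ hw]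
  intro z hz
  simpa [E, Set.piecewise_eq_of_notMem _ _ _ hz] using hEdiff.apply_eq_of_tendsto_cocompact z hElim

section Nikishin

variable {m : ℕ} {a b : ℕ → ℝ} {σ : ℕ → Measure ℝ}

lemma cSeg_eq_image {j : ℕ} (hj : 1 ≤ j) (hjm : j ≤ m) :
    cSeg m a b j = ((↑) : ℝ → ℂ) '' Set.Icc (a j) (b j) := by
  ext w
  simp only [cSeg, if_pos (And.intro hj hjm), Set.mem_ofPred_eq, Set.mem_image, Set.mem_Icc]
  constructor
  · rintro ⟨him, ha, hb⟩
    exact ⟨w.re, ⟨ha, hb⟩, Complex.ext (by simp) (by simp [him])⟩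
  · rintro ⟨x, ⟨ha, hb⟩, rfl⟩
    simp [ha, hb]

lemma NikishinData.ae_mem (hNik : NikishinData m a b σ) {j : ℕ} (hj : 1 ≤ j) (hjm : j ≤ m) :
    ∀ᵐ x ∂σ j, x ∈ Set.Icc (a j) (b j) :=
  ae_iff.2 (hNik.2 j hj hjm).2.1

lemma NikishinData.isFiniteMeasure (hNik : NikishinData m a b σ) {j : ℕ} (hj : 1 ≤ j)
    (hjm : j ≤ m) : IsFiniteMeasure (σ j) :=
  (hNik.2 j hj hjm).1

lemma continuousOn_ofReal_of_differentiableOn {f : ℂ → ℂ} {K L : Set ℝ}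
    (hf : DifferentiableOn ℂ f (((↑) : ℝ → ℂ) '' L)ᶜ) (hKL : K ∩ L = ∅) :
    ContinuousOn (fun x : ℝ => f x) K :=
  hf.continuousOn.comp Complex.continuous_ofReal.continuousOn fun x hxK ⟨_, hyL, hyx⟩ =>
    (Set.eq_empty_iff_forall_notMem.1 hKL) x ⟨hxK, Complex.ofReal_injective hyx ▸ hyL⟩

lemma nikAux_zero (j : ℕ) : nikAux σ 0 j = cauchyInt (σ j) fun _ => 1 := by
  funext z
  simp [nikAux, cauchyT, cauchyInt, one_div]

lemma nikAux_succ (g j : ℕ) :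
    nikAux σ (g + 1) j = cauchyInt (σ j) fun x => nikAux σ g (j + 1) x :=
  rfl

lemma differentiableOn_nikAux (hNik : NikishinData m a b σ) (g : ℕ) :
    ∀ j, 1 ≤ j → j + g ≤ m →
      DifferentiableOn ℂ (nikAux σ g j) (((↑) : ℝ → ℂ) '' Set.Icc (a j) (b j))ᶜ := by
  induction g with
  | zero =>
    intro j hj hjm
    have := hNik.isFiniteMeasure hj hjm
    rw [nikAux_zero]
    exact differentiableOn_cauchyInt isCompact_Icc (hNik.ae_mem hj hjm) (integrable_const 1)
  | succ g ih =>
    intro j hj hjm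
    have := hNik.isFiniteMeasure hj (by omega)
    have hcont := continuousOn_ofReal_of_differentiableOn (ih (j + 1) (by omega) (by omega))
      (hNik.1.2 j hj (by omega))
    rw [nikAux_succ]
    exact differentiableOn_cauchyInt isCompact_Icc (hNik.ae_mem hj (by omega))
      (hcont.integrable_of_ae_mem isCompact_Icc (hNik.ae_mem hj (by omega)))

lemma sHat_one_one : sHat σ 1 1 = cauchyInt (σ 1) fun _ => 1 := by
  simp [sHat, nikAux_zero]

lemma sHat_one_of_two_le {k : ℕ} (hk : 2 ≤ k) :
    sHat σ 1 k = cauchyInt (σ 1) fun x => sHat σ 2 k x := by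
  obtain ⟨g, rfl⟩ := Nat.exists_eq_add_of_le' hk
  simp [sHat, nikAux_succ]

lemma continuousOn_sHat_two (hNik : NikishinData m a b σ) {k : ℕ} (hk : 2 ≤ k) (hkm : k ≤ m) :
    ContinuousOn (fun x : ℝ => sHat σ 2 k x) (Set.Icc (a 1) (b 1)) := by
  rw [sHat, if_pos hk]
  exact continuousOn_ofReal_of_differentiableOn
    (differentiableOn_nikAux hNik (k - 2) 2 (by omega) (by omega)) (hNik.1.2 1 le_rfl (by omega))

lemma continuousOn_formGen_one (hNik : NikishinData m a b σ) (aP : ℕ → ℝ[X]) :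
    ContinuousOn (fun x : ℝ => formGen m σ aP 1 x) (Set.Icc (a 1) (b 1)) := by
  have hpoly : ∀ k, Continuous fun x : ℝ => aeval (x : ℂ) (aP k) := fun k =>
    (aP k).continuous_aeval.comp Complex.continuous_ofReal
  simp only [formGen, Nat.reduceAdd]
  exact (hpoly 1).continuousOn.add (continuousOn_finsetSum _ fun k hk =>
    (hpoly k).continuousOn.mul (continuousOn_sHat_two hNik (Finset.mem_Icc.1 hk).1
      (Finset.mem_Icc.1 hk).2))

lemma exists_cauchyInt_formGen_one (hm : 1 ≤ m) (hNik : NikishinData m a b σ)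
    (aP : ℕ → ℝ[X]) :
    ∃ P : ℂ[X], ∀ z ∉ ((↑) : ℝ → ℂ) '' Set.Icc (a 1) (b 1),
      cauchyInt (σ 1) (fun x => formGen m σ aP 1 x) z = formGen m σ aP 0 z - P.eval z := by
  have hK : IsCompact (Set.Icc (a 1) (b 1)) := isCompact_Icc
  have hμK := hNik.ae_mem le_rfl hm
  have := hNik.isFiniteMeasure le_rfl hm
  set p : ℕ → ℂ[X] := fun k => (aP k).map (algebraMap ℝ ℂ) with hp
  have hg : ∀ k ∈ Finset.Icc 2 m, Integrable (fun x : ℝ => sHat σ 2 k x) (σ 1) := fun k hk =>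
    (continuousOn_sHat_two hNik (Finset.mem_Icc.1 hk).1 (Finset.mem_Icc.1 hk).2)
      |>.integrable_of_ae_mem hK hμK
  have hpg : ∀ k ∈ Finset.Icc 2 m,
      Integrable (fun x : ℝ => (p k).eval (x : ℂ) * sHat σ 2 k x) (σ 1) := fun k hk =>
    ((p k).continuous.comp Complex.continuous_ofReal).continuousOn.integrable_mul_of_ae_mem
      hK hμK (hg k hk)
  have hp1 : Integrable (fun x : ℝ => (p 1).eval (x : ℂ) * 1) (σ 1) :=
    ((p 1).continuous.comp Complex.continuous_ofReal).continuousOn.integrable_mul_of_ae_mem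
      hK hμK (integrable_const 1)
  obtain ⟨P₁, hP₁⟩ := exists_cauchyInt_eval_mul_eq hK hμK (integrable_const 1) (p 1)
  choose! P hP using fun k (hk : k ∈ Finset.Icc 2 m) =>
    exists_cauchyInt_eval_mul_eq hK hμK (hg k hk) (p k)
  refine ⟨P₁ + ∑ k ∈ Finset.Icc 2 m, P k + p 0, fun z hz => ?_⟩
  have hA₁ : (fun x : ℝ => formGen m σ aP 1 x) = fun x : ℝ =>
      (p 1).eval (x : ℂ) * 1 + ∑ k ∈ Finset.Icc 2 m, (p k).eval (x : ℂ) * sHat σ 2 k x := by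
    funext x
    simp [formGen, hp]
  have hsum : ∑ k ∈ Finset.Icc 2 m, aeval z (aP k) * sHat σ 1 k z =
      ∑ k ∈ Finset.Icc 2 m, (p k).eval z * cauchyInt (σ 1) (fun x => sHat σ 2 k x) z :=
    Finset.sum_congr rfl fun k hk => by
      rw [sHat_one_of_two_le (Finset.mem_Icc.1 hk).1, hp, eval_map_algebraMap]
  rw [hA₁, cauchyInt_add hK hμK hp1 (integrable_finsetSum _ hpg) hz,
    cauchyInt_finsetSum _ hK hμK hpg hz, hP₁ z hz, Finset.sum_congr rfl fun k hk => hP k hk z hz,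
    formGen, zero_add, ← Finset.insert_Icc_add_one_left_eq_Icc hm, Finset.sum_insert (by simp),
    one_add_one_eq_two, sHat_one_one, hsum]
  simp only [hp, eval_map_algebraMap, eval_add, eval_finsetSum, Finset.sum_sub_distrib]
  ring

lemma exists_formGen_zero_div_sub_cauchyInt_eq (hm : 1 ≤ m) (hNik : NikishinData m a b σ)
    (aP : ℕ → ℝ[X]) (q : ℂ[X]) (hq : ∀ x ∈ Set.Icc (a 1) (b 1), q.eval (x : ℂ) ≠ 0) :
    ∃ P : ℂ[X], ∀ z ∉ ((↑) : ℝ → ℂ) '' Set.Icc (a 1) (b 1), q.eval z ≠ 0 →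
      formGen m σ aP 0 z / q.eval z -
          cauchyInt (σ 1) (fun x => formGen m σ aP 1 x / q.eval (x : ℂ)) z =
        P.eval z / q.eval z := by
  have hμK := hNik.ae_mem le_rfl hm
  have := hNik.isFiniteMeasure le_rfl hm
  obtain ⟨P₀, hP₀⟩ := exists_cauchyInt_formGen_one hm hNik aP
  obtain ⟨P₁, hP₁⟩ := exists_eval_mul_cauchyInt_div_eq isCompact_Icc hμK
    ((continuousOn_formGen_one hNik aP).integrable_of_ae_mem isCompact_Icc hμK) q hq
  refine ⟨P₀ - P₁, fun z hz hqz => ?_⟩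
  rw [eq_div_iff hqz, sub_mul, div_mul_cancel₀ _ hqz, mul_comm, hP₁ z hz, hP₀ z hz, eval_sub]
  ring

end Nikishin

theorem form_reduction_formula_general
    (m : ℕ) (hm : 2 ≤ m) (a b : ℕ → ℝ) (σ : ℕ → Measure ℝ)
    (hNik : NikishinData m a b σ)
    (aP : ℕ → Polynomial ℝ) (Q : Polynomial ℝ)
    (hQroots : ∀ z : ℂ, Polynomial.aeval z Q = 0 → z ∉ cSeg m a b 1)
    (N : ℕ) (hN : 1 ≤ N) (F : ℂ → ℂ)
    (hF : DifferentiableOn ℂ F (cSeg m a b 1)ᶜ)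
    (hFeq : ∀ z ∉ cSeg m a b 1, Polynomial.aeval z Q ≠ 0 →
      F z = formGen m σ aP 0 z / Polynomial.aeval z Q)
    (hBound : BoundedWithOrder F N) :
    ∀ z ∉ cSeg m a b 1,
      F z = ∫ x, formGen m σ aP 1 (x : ℂ) /
        ((z - (x : ℂ)) * Polynomial.aeval (x : ℂ) Q) ∂(σ 1) := by
  have h1m : 1 ≤ m := by omega
  rw [cSeg_eq_image le_rfl h1m] at hQroots hF hFeq ⊢
  have hK : IsCompact (Set.Icc (a 1) (b 1)) := isCompact_Icc
  have hμK := hNik.ae_mem le_rfl h1m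
  have := hNik.isFiniteMeasure le_rfl h1m
  set q : ℂ[X] := Q.map (algebraMap ℝ ℂ)
  have hq : ∀ z, q.eval z = aeval z Q := eval_map_algebraMap Q
  have hqK : ∀ x ∈ Set.Icc (a 1) (b 1), q.eval (x : ℂ) ≠ 0 := fun x hx h =>
    hQroots x (by rwa [← hq]) ⟨x, hx, rfl⟩
  have hA₁q : Integrable (fun x : ℝ => formGen m σ aP 1 x / q.eval (x : ℂ)) (σ 1) :=
    (continuousOn_formGen_one hNik aP).div
      (q.continuous.comp Complex.continuous_ofReal).continuousOn hqK |>.integrable_of_ae_mem hK hμK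
  obtain ⟨P, hP⟩ := exists_formGen_zero_div_sub_cauchyInt_eq h1m hNik aP q hqK
  set G := cauchyInt (σ 1) fun x => formGen m σ aP 1 x / q.eval (x : ℂ)
  have hFG := eqOn_zero_of_eq_div_of_tendsto_cocompact (H := fun z => F z - G z)
    (hK.image Complex.continuous_ofReal) (hF.sub (differentiableOn_cauchyInt hK hμK hA₁q))
    (fun _ ⟨x, hx, hxz⟩ => hxz ▸ hqK x hx)
    (fun z hz hqz => by rw [hFeq z hz (hq z ▸ hqz), ← hq, hP z hz hqz])
    (by simpa using (hBound.tendsto_cocompact hN).sub (tendsto_cauchyInt_cocompact hK hμK hA₁q))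
  intro z hz
  rw [sub_eq_zero.1 (hFG z hz)]
  exact integral_congr_ae <| ae_of_all _ fun x => by
    dsimp only
    rw [hq, div_div, mul_comm (aeval _ Q)]

/-- Formula (2.1) of the paper: if `A_0/Q` is holomorphic in `ℂ ∖ Δ_1` and
`A_0/Q = O(z^{-N})` at `∞` with `N ≥ 1`, then
`A_0(z)/Q(z) = ∫ A_1(x)/((z-x)Q(x)) dσ_1(x)` on `ℂ ∖ Δ_1`. -/
theorem form_reduction_formula
    (m : ℕ) (hm : 2 ≤ m) (a b : ℕ → ℝ) (σ : ℕ → Measure ℝ)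
    (hNik : NikishinData m a b σ)
    (aP : ℕ → Polynomial ℝ) (Q : Polynomial ℝ) (hQmonic : Q.Monic)
    (hQroots : ∀ z : ℂ, Polynomial.aeval z Q = 0 → z ∉ cSeg m a b 1)
    (N : ℕ) (hN : 1 ≤ N) (F : ℂ → ℂ)
    (hF : DifferentiableOn ℂ F (cSeg m a b 1)ᶜ)
    (hFeq : ∀ z ∉ cSeg m a b 1, Polynomial.aeval z Q ≠ 0 →
      F z = formGen m σ aP 0 z / Polynomial.aeval z Q)
    (hBound : BoundedWithOrder F N) :
    ∀ z ∉ cSeg m a b 1,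
      F z = ∫ x, formGen m σ aP 1 (x : ℂ) /
        ((z - (x : ℂ)) * Polynomial.aeval (x : ℂ) Q) ∂(σ 1) :=
  form_reduction_formula_general m hm a b σ hNik aP Q hQroots N hN F hF hFeq hBound
end
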